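/- Suppose m > 0 and Requirement 1 holds. Let X* be the (nonempty, convex, compact) set of minimizers of f over C, let x* be the unique minimizer of g over X*, and for each k ≥ 1 let x_k* be the unique minimizer of J_k over ℝⁿ. Then g(x_k*) ≤ g(x*) and f(x_k*) ≤ f(x*) + p_k(x*) for every k ≥ 1. -/

import Mathlib

open Matrix Filter

noncomputable def fObj {n : ℕ} (Q : Matrix (Fin n) (Fin n) ℝ) (q : Fin n → ℝ) (x : Fin n → ℝ) : ℝ :=
  (1 / 2) * (x ⬝ᵥ Q.mulVec x) + q ⬝ᵥ x

noncomputable def gCon {n : ℕ} (A : Matrix (Fin n) (Fin n) ℝ) (v : Fin n → ℝ) (x : Fin n → ℝ) : ℝ :=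
  (x - v) ⬝ᵥ A.mulVec (x - v)

noncomputable def pPen {n : ℕ} (A : Matrix (Fin n) (Fin n) ℝ) (v : Fin n → ℝ) (m : ℝ) (k : ℕ)
    (x : Fin n → ℝ) : ℝ :=
  (m / (k : ℝ)) * (gCon A v x) ^ k

noncomputable def Jaux {n : ℕ} (Q : Matrix (Fin n) (Fin n) ℝ) (q : Fin n → ℝ)
    (A : Matrix (Fin n) (Fin n) ℝ) (v : Fin n → ℝ) (m : ℝ) (k : ℕ) (x : Fin n → ℝ) : ℝ :=
  fObj Q q x + pPen A v m k x

noncomputable def gradF {n : ℕ} (Q : Matrix (Fin n) (Fin n) ℝ) (q : Fin n → ℝ)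
    (x : Fin n → ℝ) : Fin n → ℝ :=
  Q.mulVec x + q

noncomputable def gradG {n : ℕ} (A : Matrix (Fin n) (Fin n) ℝ) (v : Fin n → ℝ)
    (x : Fin n → ℝ) : Fin n → ℝ :=
  (2 : ℝ) • A.mulVec (x - v)

noncomputable def gradJ {n : ℕ} (Q : Matrix (Fin n) (Fin n) ℝ) (q : Fin n → ℝ)
    (A : Matrix (Fin n) (Fin n) ℝ) (v : Fin n → ℝ) (m : ℝ) (k : ℕ) (x : Fin n → ℝ) : Fin n → ℝ :=
  gradF Q q x + (m * (gCon A v x) ^ (k - 1)) • gradG A v x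

noncomputable def lambdaMax {n : ℕ} (M : Matrix (Fin n) (Fin n) ℝ) : ℝ :=
  sSup {μ : ℝ | Module.End.HasEigenvalue (Matrix.toLin' M) μ}

noncomputable def lambdaMin {n : ℕ} (M : Matrix (Fin n) (Fin n) ℝ) : ℝ :=
  sInf {μ : ℝ | Module.End.HasEigenvalue (Matrix.toLin' M) μ}

noncomputable def enorm' {n : ℕ} (w : Fin n → ℝ) : ℝ := Real.sqrt (w ⬝ᵥ w)

def Req1 {n : ℕ} (Q : Matrix (Fin n) (Fin n) ℝ) (q : Fin n → ℝ)
    (A : Matrix (Fin n) (Fin n) ℝ) (v : Fin n → ℝ) (m : ℝ) : Prop :=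
  ∀ x : Fin n → ℝ, gCon A v x = 1 →
    0 ≤ gradG A v x ⬝ᵥ (gradF Q q x + m • gradG A v x)

noncomputable def Lsmooth {n : ℕ} (Q A : Matrix (Fin n) (Fin n) ℝ) (m : ℝ) (k : ℕ) : ℝ :=
  lambdaMax (Q + (m * (4 * (k : ℝ) - 2)) • A)

def Req2 {n : ℕ} (Q : Matrix (Fin n) (Fin n) ℝ) (q : Fin n → ℝ)
    (A : Matrix (Fin n) (Fin n) ℝ) (v : Fin n → ℝ) (m : ℝ) : Prop :=
  ∀ x : Fin n → ℝ, gCon A v x = 1 →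
    ((gradF Q q x + m • gradG A v x) ⬝ᵥ (gradF Q q x + m • gradG A v x)) * enorm' (gradG A v x) ≤
      2 * (Real.sqrt (lambdaMin A) / lambdaMax A) * Lsmooth Q A m 1 *
        ((gradF Q q x + m • gradG A v x) ⬝ᵥ gradG A v x)

/-!
If the minimizer `x` of `J_k` were infeasible, its Euclidean projection `b` onto the ellipsoid
`C` would lie on the boundary `g = 1`, with `x - b` a nonnegative multiple of the outward normal
`∇g b`. On the boundary `∇J_k b = ∇f b + m ∇g b`, so Requirement 1 makes the first-order change
of `J_k` from `b` towards `x` nonnegative, and strict convexity of `g` (with `t ↦ t ^ k` convex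
and increasing) gives `J_k b < J_k x`, a contradiction. Once `x ∈ C`, `f x* ≤ f x` together with
`J_k x ≤ J_k x*` forces `g x ^ k ≤ g x* ^ k`; the second inequality is `J_k x ≤ J_k x*` and
`p_k ≥ 0`.
-/

open Topology

section Quadratic

variable {ι : Type*} [Fintype ι] {A : Matrix ι ι ℝ}

lemma Matrix.IsHermitian.dotProduct_mulVec_comm (hA : A.IsHermitian) (x y : ι → ℝ) :
    x ⬝ᵥ A *ᵥ y = y ⬝ᵥ A *ᵥ x := by
  rw [dotProduct_mulVec, ← mulVec_transpose, ← conjTranspose_eq_transpose_of_trivial, hA.eq,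
    dotProduct_comm]

lemma Matrix.IsHermitian.add_dotProduct_mulVec_add (hA : A.IsHermitian) (x y : ι → ℝ) :
    (x + y) ⬝ᵥ A *ᵥ (x + y) = x ⬝ᵥ A *ᵥ x + 2 * (y ⬝ᵥ A *ᵥ x) + y ⬝ᵥ A *ᵥ y := by
  simp only [mulVec_add, dotProduct_add, add_dotProduct]
  linear_combination hA.dotProduct_mulVec_comm x y

lemma Matrix.PosSemidef.dotProduct_mulVec_self_nonneg (hA : A.PosSemidef) (x : ι → ℝ) :
    0 ≤ x ⬝ᵥ A *ᵥ x := by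
  simpa only [star_trivial] using hA.dotProduct_mulVec_nonneg x

lemma Matrix.PosSemidef.convexOn_dotProduct_mulVec (hA : A.PosSemidef) :
    ConvexOn ℝ Set.univ fun x : ι → ℝ => x ⬝ᵥ A *ᵥ x := by
  refine ⟨convex_univ, fun x _ y _ a b ha hb hab => ?_⟩
  have hxy := hA.isHermitian.add_dotProduct_mulVec_add x (y - x)
  have hmid := hA.isHermitian.add_dotProduct_mulVec_add x (b • (y - x))
  rw [add_sub_cancel] at hxy
  obtain rfl : a = 1 - b := by linarith
  rw [show (1 - b) • x + b • y = x + b • (y - x) by rw [smul_sub, sub_smul, one_smul]; abel]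
  simp only [hmid, mulVec_smul, smul_dotProduct, dotProduct_smul, smul_eq_mul] at hxy ⊢
  nlinarith [mul_nonneg (mul_nonneg ha hb) (hA.dotProduct_mulVec_self_nonneg (y - x))]

end Quadratic

lemma dotProduct_self_nonneg {ι R : Type*} [Fintype ι] [Ring R] [LinearOrder R]
    [IsStrictOrderedRing R] (w : ι → R) : 0 ≤ w ⬝ᵥ w :=
  Finset.sum_nonneg fun _ _ => mul_self_nonneg _

lemma exists_pos_add_mul_add_mul_nonpos {a b c : ℝ} (ha : a ≤ 0) (h : a < 0 ∨ b < 0) :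
    ∃ s : ℝ, 0 < s ∧ a + s * (b + c * s) ≤ 0 := by
  have hlim {φ : ℝ → ℝ} (hφ : Continuous φ) : Tendsto φ (𝓝[>] 0) (𝓝 (φ 0)) :=
    hφ.continuousAt.tendsto.mono_left nhdsWithin_le_nhds
  rcases h with ha' | hb
  · have hφ : Continuous fun s : ℝ => a + s * (b + c * s) := by fun_prop
    obtain ⟨s, hs, hs0⟩ :=
      (((hlim hφ).eventually_lt_const (by simpa using ha')).and self_mem_nhdsWithin).exists
    exact ⟨s, hs0, hs.le⟩
  · have hφ : Continuous fun s : ℝ => b + c * s := by fun_prop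
    obtain ⟨s, hs, hs0⟩ :=
      (((hlim hφ).eventually_lt_const (by simpa using hb)).and self_mem_nhdsWithin).exists
    exact ⟨s, hs0, by nlinarith [hs0]⟩

theorem exists_dotProduct_sub_nonpos_of_convex {ι : Type*} [Fintype ι] {S : Set (ι → ℝ)}
    (hne : S.Nonempty) (hS : IsClosed S) (hconv : Convex ℝ S) (x : ι → ℝ) :
    ∃ b ∈ S, ∀ y ∈ S, (x - b) ⬝ᵥ (y - b) ≤ 0 := by
  let e := EuclideanSpace.equiv ι ℝ
  have hK : Convex ℝ (e ⁻¹' S) := hconv.linear_preimage e.toLinearMap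
  obtain ⟨b, hb, hmin⟩ := exists_norm_eq_iInf_of_complete_convex (hne.preimage e.surjective)
    (hS.preimage e.continuous).isComplete hK (e.symm x)
  refine ⟨e b, hb, fun y hy => ?_⟩
  have := (norm_eq_iInf_iff_real_inner_le_zero hK hb).1 hmin (e.symm y) (by simpa using hy)
  rwa [EuclideanSpace.inner_eq_star_dotProduct, dotProduct_comm] at this

lemma exists_nonneg_smul_eq_of_dotProduct_nonpos {ι : Type*} [Fintype ι] {c N : ι → ℝ}
    (hN : N ≠ 0) (h : ∀ w, w ⬝ᵥ N < 0 → c ⬝ᵥ w ≤ 0) : ∃ α : ℝ, 0 ≤ α ∧ c = α • N := by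
  have hNN : 0 < N ⬝ᵥ N := (dotProduct_self_nonneg N).lt_of_ne' (dotProduct_self_eq_zero.not.2 hN)
  have hcN : 0 ≤ c ⬝ᵥ N := by simpa using h (-N) (by simpa using hNN)
  set α := c ⬝ᵥ N / (N ⬝ᵥ N)
  set r := c - α • N
  have hrN : r ⬝ᵥ N = 0 := by
    simp only [r, sub_dotProduct, smul_dotProduct, smul_eq_mul, α, div_mul_cancel₀ _ hNN.ne',
      sub_self]
  have hcr : c ⬝ᵥ r = r ⬝ᵥ r := by
    rw [show c = r + α • N by simp [r], add_dotProduct, smul_dotProduct, dotProduct_comm N r, hrN,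
      smul_zero, add_zero]
  have hr : r ⬝ᵥ r ≤ 0 := by
    have key : ∀ ε > 0, r ⬝ᵥ r ≤ ε * (c ⬝ᵥ N) := fun ε hε => by
      have := h (r - ε • N) (by rw [sub_dotProduct, smul_dotProduct, hrN, smul_eq_mul]; nlinarith)
      rw [dotProduct_sub, dotProduct_smul, smul_eq_mul, hcr] at this
      linarith
    have hlim : Tendsto (fun ε : ℝ => ε * (c ⬝ᵥ N)) (𝓝[>] 0) (𝓝 0) := by
      simpa using ((continuous_mul_const (c ⬝ᵥ N)).tendsto 0).mono_left nhdsWithin_le_nhds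
    exact ge_of_tendsto hlim (eventually_mem_nhdsWithin.mono key)
  exact ⟨α, div_nonneg hcN hNN.le,
    sub_eq_zero.1 (dotProduct_self_eq_zero.1 (le_antisymm hr (dotProduct_self_nonneg r)))⟩

section Penalty

variable {n : ℕ} {Q A : Matrix (Fin n) (Fin n) ℝ} {q v : Fin n → ℝ} {m : ℝ} {k : ℕ}

lemma gCon_nonneg (hA : A.PosSemidef) (x : Fin n → ℝ) : 0 ≤ gCon A v x :=
  hA.dotProduct_mulVec_self_nonneg _

lemma gCon_add (hA : A.IsHermitian) (b u : Fin n → ℝ) :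
    gCon A v (b + u) = gCon A v b + u ⬝ᵥ gradG A v b + u ⬝ᵥ A *ᵥ u := by
  rw [gCon, add_sub_right_comm, hA.add_dotProduct_mulVec_add, gradG, dotProduct_smul, smul_eq_mul,
    gCon]

lemma continuous_gCon : Continuous (gCon A v) := by
  unfold gCon
  fun_prop

lemma convex_setOf_gCon_le (hA : A.PosSemidef) (r : ℝ) : Convex ℝ {x | gCon A v x ≤ r} := by
  have := (hA.convexOn_dotProduct_mulVec.translate_right (-v)).convex_le r
  simpa [gCon, neg_add_eq_sub] using this

lemma exists_pos_gCon_add_smul_le_one (hA : A.IsHermitian) {b : Fin n → ℝ} (hb : gCon A v b ≤ 1)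
    {d : Fin n → ℝ} (hd : gCon A v b < 1 ∨ d ⬝ᵥ gradG A v b < 0) :
    ∃ s : ℝ, 0 < s ∧ gCon A v (b + s • d) ≤ 1 := by
  obtain ⟨s, hs, hle⟩ := exists_pos_add_mul_add_mul_nonpos (c := d ⬝ᵥ A *ᵥ d) (sub_nonpos.2 hb)
    (hd.imp_left sub_neg.2)
  refine ⟨s, hs, ?_⟩
  rw [gCon_add hA]
  simp only [mulVec_smul, smul_dotProduct, dotProduct_smul, smul_eq_mul]
  linarith

lemma exists_gCon_eq_one_sub_eq_smul_gradG (hA : A.PosSemidef) {x : Fin n → ℝ}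
    (hx : 1 < gCon A v x) : ∃ b, gCon A v b = 1 ∧ ∃ α : ℝ, 0 ≤ α ∧ x - b = α • gradG A v b := by
  obtain ⟨b, hbC, hproj⟩ := exists_dotProduct_sub_nonpos_of_convex (S := {x | gCon A v x ≤ 1})
    ⟨v, by simp [gCon]⟩ (isClosed_le continuous_gCon continuous_const) (convex_setOf_gCon_le hA 1) x
  have hdir (d : Fin n → ℝ) (hd : gCon A v b < 1 ∨ d ⬝ᵥ gradG A v b < 0) : (x - b) ⬝ᵥ d ≤ 0 := by
    obtain ⟨s, hs, hsC⟩ := exists_pos_gCon_add_smul_le_one hA.isHermitian hbC hd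
    have := hproj _ hsC
    rw [add_sub_cancel_left, dotProduct_smul, smul_eq_mul] at this
    exact nonpos_of_mul_nonpos_right this hs
  have hb : gCon A v b = 1 := by
    refine hbC.eq_of_not_lt fun hlt => ?_
    have hxb : x - b = 0 := dotProduct_self_eq_zero.1 <|
      (hdir _ (.inl hlt)).antisymm (dotProduct_self_nonneg _)
    rw [sub_eq_zero.1 hxb] at hx
    linarith
  have hN : gradG A v b ≠ 0 := fun h0 => by
    have : A *ᵥ (b - v) = 0 := by simpa [gradG] using h0
    simp [gCon, this] at hb
  exact ⟨b, hb, exists_nonneg_smul_eq_of_dotProduct_nonpos hN fun w hw => hdir w (.inr hw)⟩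

lemma fObj_add_ge (hQ : Q.PosSemidef) (b u : Fin n → ℝ) :
    fObj Q q b + u ⬝ᵥ gradF Q q b ≤ fObj Q q (b + u) := by
  have hexp := hQ.isHermitian.add_dotProduct_mulVec_add b u
  have := hQ.dotProduct_mulVec_self_nonneg u
  simp only [fObj, gradF, hexp, dotProduct_add, dotProduct_comm q u]
  linarith

lemma pPen_nonneg (hA : A.PosSemidef) (hm : 0 ≤ m) (x : Fin n → ℝ) : 0 ≤ pPen A v m k x :=
  mul_nonneg (div_nonneg hm k.cast_nonneg) (pow_nonneg (gCon_nonneg hA x) k)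

lemma add_mul_sub_one_le_pPen (hA : A.PosSemidef) (hm : 0 ≤ m) (hk : k ≠ 0) (x : Fin n → ℝ) :
    m / k + m * (gCon A v x - 1) ≤ pPen A v m k x := by
  have hbern := one_add_mul_le_pow (a := gCon A v x - 1) (by linarith [gCon_nonneg hA (v := v) x]) k
  rw [add_sub_cancel] at hbern
  calc m / k + m * (gCon A v x - 1) = m / k * (1 + k * (gCon A v x - 1)) := by field_simp
    _ ≤ pPen A v m k x := mul_le_mul_of_nonneg_left hbern (div_nonneg hm k.cast_nonneg)

lemma Jaux_lt_of_sub_eq_smul_gradG (hQ : Q.PosSemidef) (hA : A.PosDef) (hm : 0 < m) (hk : k ≠ 0)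
    (hreq1 : Req1 Q q A v m) {b x : Fin n → ℝ} (hb : gCon A v b = 1) (hxb : x ≠ b) {α : ℝ}
    (hα : 0 ≤ α) (hx : x - b = α • gradG A v b) : Jaux Q q A v m k b < Jaux Q q A v m k x := by
  obtain ⟨u, rfl⟩ : ∃ u, x = b + u := ⟨x - b, by abel⟩
  rw [add_sub_cancel_left] at hx
  have hu : 0 < u ⬝ᵥ A *ᵥ u := by
    simpa only [star_trivial] using hA.dotProduct_mulVec_pos (by simpa using hxb)
  have hnormal : 0 ≤ u ⬝ᵥ gradF Q q b + m * (u ⬝ᵥ gradG A v b) := by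
    have := mul_nonneg hα (hreq1 b hb)
    simp only [dotProduct_add, dotProduct_smul, smul_eq_mul] at this
    simp only [hx, smul_dotProduct, smul_eq_mul]
    linarith
  have hf := fObj_add_ge (q := q) hQ b u
  have hp := add_mul_sub_one_le_pPen hA.posSemidef hm.le hk (v := v) (b + u)
  rw [gCon_add hA.isHermitian, hb] at hp
  have hpb : pPen A v m k b = m / k := by rw [pPen, hb, one_pow, mul_one]
  rw [Jaux, Jaux, hpb]
  nlinarith [mul_pos hm hu]

theorem gCon_le_one_of_forall_Jaux_le (hQ : Q.PosSemidef) (hA : A.PosDef) (hm : 0 < m)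
    (hk : k ≠ 0) (hreq1 : Req1 Q q A v m) {x : Fin n → ℝ}
    (hmin : ∀ y, Jaux Q q A v m k x ≤ Jaux Q q A v m k y) : gCon A v x ≤ 1 := by
  by_contra! hx
  obtain ⟨b, hb, α, hα, hxb⟩ := exists_gCon_eq_one_sub_eq_smul_gradG hA.posSemidef hx
  have hne : x ≠ b := by rintro rfl; linarith
  exact (hmin b).not_gt (Jaux_lt_of_sub_eq_smul_gradG hQ hA hm hk hreq1 hb hne hα hxb)

end Penalty

theorem auxiliary_minimizer_localization_general {n : ℕ}
    (Q A : Matrix (Fin n) (Fin n) ℝ) (q v : Fin n → ℝ)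
    (hQ : Q.PosSemidef) (hA : A.PosDef) (m : ℝ) (hm : 0 < m)
    (hreq1 : Req1 Q q A v m)
    (xstar : Fin n → ℝ)
    (hxstar_mem : gCon A v xstar ≤ 1 ∧ ∀ y : Fin n → ℝ, gCon A v y ≤ 1 → fObj Q q xstar ≤ fObj Q q y)
    (k : ℕ) (hk : 1 ≤ k)
    (xks : Fin n → ℝ) (hmin : ∀ x : Fin n → ℝ, Jaux Q q A v m k xks ≤ Jaux Q q A v m k x) :
    gCon A v xks ≤ gCon A v xstar ∧
      fObj Q q xks ≤ fObj Q q xstar + pPen A v m k xstar := by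
  have hk0 : k ≠ 0 := Nat.one_le_iff_ne_zero.1 hk
  have hmk : 0 < m / k := by positivity
  have hf : fObj Q q xstar ≤ fObj Q q xks :=
    hxstar_mem.2 xks (gCon_le_one_of_forall_Jaux_le hQ hA hm hk0 hreq1 hmin)
  have hJ := hmin xstar
  have hpen := pPen_nonneg hA.posSemidef hm.le (v := v) (k := k) xks
  unfold Jaux at hJ
  refine ⟨?_, by linarith⟩
  unfold pPen at hJ
  have hpow : gCon A v xks ^ k ≤ gCon A v xstar ^ k := le_of_mul_le_mul_left (by linarith) hmk
  exact (pow_le_pow_iff_left₀ (gCon_nonneg hA.posSemidef xks) (gCon_nonneg hA.posSemidef xstar)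
    hk0).1 hpow

/-- With `m > 0` and Requirement 1, letting `X*` be the set of minimizers
of `f` over `C`, `x*` the (unique) minimizer of `g` over `X*`, and `x_k*` the (unique)
minimizer of `J_k` over `ℝⁿ`, one has `g(x_k*) ≤ g(x*)` and `f(x_k*) ≤ f(x*) + p_k(x*)`. -/
theorem auxiliary_minimizer_localization {n : ℕ} (hn : 1 ≤ n)
    (Q A : Matrix (Fin n) (Fin n) ℝ) (q v : Fin n → ℝ)
    (hQ : Q.PosSemidef) (hA : A.PosDef) (m : ℝ) (hm : 0 < m)
    (hreq1 : Req1 Q q A v m)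
    (xstar : Fin n → ℝ)
    (hxstar_mem : gCon A v xstar ≤ 1 ∧ ∀ y : Fin n → ℝ, gCon A v y ≤ 1 → fObj Q q xstar ≤ fObj Q q y)
    (hxstar_g : ∀ y : Fin n → ℝ,
      (gCon A v y ≤ 1 ∧ ∀ z : Fin n → ℝ, gCon A v z ≤ 1 → fObj Q q y ≤ fObj Q q z) →
      gCon A v xstar ≤ gCon A v y)
    (k : ℕ) (hk : 1 ≤ k)
    (xks : Fin n → ℝ) (hmin : ∀ x : Fin n → ℝ, Jaux Q q A v m k xks ≤ Jaux Q q A v m k x) :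
    gCon A v xks ≤ gCon A v xstar ∧
      fObj Q q xks ≤ fObj Q q xstar + pPen A v m k xstar :=
  auxiliary_minimizer_localization_general Q A q v hQ hA m hm hreq1 xstar hxstar_mem k hk xks hmin
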